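/- arXiv:2103.00425 — 5 statements merged into one kernel-verified Lean document; each statement's English description precedes it below -/
import Mathlib

section
/- Let G be a finite Frobenius group whose Frobenius complement has order 2. Then G has perfect order classes if, and only if, G is isomorphic to the dihedral group of order 2·3^k for some positive integer k (i.e., the dihedral group of degree a power of 3). -/
/-- The number of elements of order `n` in the group `G`. -/
noncomputable def orderCount (G : Type*) [Group G] (n : ℕ) : ℕ :=
  Nat.card {g : G // orderOf g = n}

/-- A group has *perfect order classes* if, for every positive integer `n`, the number of
elements of order `n` is either zero or a divisor of the order of the group. -/
def PerfectOrderClasses (G : Type*) [Group G] : Prop :=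
  ∀ n : ℕ, 0 < n → orderCount G n = 0 ∨ orderCount G n ∣ Nat.card G

/-- `G` is a Frobenius group with Frobenius kernel `K` and Frobenius complement `H`:
`K` is a nontrivial proper normal subgroup, `H` a subgroup with `K ⊓ H = ⊥` and `KH = G`,
and the conjugation action of `H` on `K` is fixed-point-free. -/
def IsFrobeniusWith {G : Type*} [Group G] (K H : Subgroup G) : Prop :=
  K ≠ ⊥ ∧ K ≠ ⊤ ∧ K.Normal ∧ K ⊓ H = ⊥ ∧
    (∀ g : G, ∃ k ∈ K, ∃ h ∈ H, g = k * h) ∧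
    ∀ h ∈ H, h ≠ 1 → ∀ k ∈ K, k ≠ 1 → h * k * h⁻¹ ≠ k

/-!
An involution `s` of the complement acts on the kernel `K` as a fixed-point-free automorphism of
order two, so it inverts `K`: thus `K` is abelian of odd order, every element outside `K` is an
involution, and `|G| = 2|K|`. Hence all elements of odd order lie in `K`, and perfect order
classes say that the number of elements of each odd order `n` in `K`, a multiple of `φ n`,
divides `2|K|`. Two distinct primes `p, q` dividing `|K|` would give `4 ∣ φ (p q) ∣ 2|K|`, so
`|K| = p ^ a`. The `p`-torsion of `K` has `c + 1` elements with `c ∣ 2` and `p ∣ c + 1`, which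
forces `p = 3` and only three solutions of `x ^ 3 = 1`; an abelian group with at most `q`
solutions of `x ^ q = 1` for every prime `q` is cyclic, so `G` is dihedral of degree `3 ^ a`.
Conversely, `D (3 ^ k)` has `φ (3 ^ j)` elements of order `3 ^ j` and `3 ^ k` involutions, all
dividing `2 · 3 ^ k`.
-/

open Subgroup
open scoped IsMulCommutative

theorem orderCount_congr {G G' : Type*} [Group G] [Group G'] (e : G ≃* G') (n : ℕ) :
    orderCount G n = orderCount G' n :=
  Nat.card_congr <| e.toEquiv.subtypeEquiv fun g => by simp [MulEquiv.orderOf_eq]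

theorem PerfectOrderClasses.of_mulEquiv {G G' : Type*} [Group G] [Group G'] (e : G ≃* G')
    (h : PerfectOrderClasses G') : PerfectOrderClasses G := fun n hn => by
  simpa only [orderCount_congr e, Nat.card_congr e.toEquiv] using h n hn

theorem orderCount_ne_zero_of_orderOf_eq {G : Type*} [Group G] [Finite G] {g : G} {n : ℕ}
    (hg : orderOf g = n) : orderCount G n ≠ 0 :=
  have : Nonempty {g : G // orderOf g = n} := ⟨⟨g, hg⟩⟩
  Nat.card_pos.ne'

theorem Subgroup.orderCount_eq_of_forall_mem {G : Type*} [Group G] (K : Subgroup G) {n : ℕ}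
    (hK : ∀ g : G, orderOf g = n → g ∈ K) : orderCount K n = orderCount G n :=
  Nat.card_congr <| (Equiv.subtypeEquivRight fun k => by rw [Subgroup.orderOf_coe]).trans <|
    Equiv.subtypeSubtypeEquivSubtype (p := (· ∈ K)) (hK _)

open Finset in
theorem totient_dvd_orderCount (G : Type*) [Group G] [Finite G] (n : ℕ) :
    n.totient ∣ orderCount G n := by
  classical
  have := Fintype.ofFinite G
  set S : Finset G := {g | orderOf g = n}
  have hS : orderCount G n = #S := by
    rw [orderCount, Nat.card_eq_fintype_card, Fintype.card_subtype]
  -- group the elements of order `n` by the cyclic subgroup they generate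
  rw [hS, card_eq_sum_card_fiberwise (f := zpowers) (t := S.image zpowers)
    fun g hg => mem_image_of_mem _ hg]
  refine dvd_sum fun C hC => ?_
  obtain ⟨g, hg, rfl⟩ := mem_image.1 hC
  replace hg : orderOf g = n := (mem_filter.1 hg).2
  have hfiber : {x ∈ S | zpowers x = zpowers g} =
      ({x : zpowers g | orderOf x = n} : Finset _).map (Function.Embedding.subtype _) := by
    ext x
    simp only [S, mem_filter, mem_univ, true_and, mem_map, Function.Embedding.coe_subtype,
      Subtype.exists, orderOf_mk, exists_and_right, exists_eq_right]
    constructor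
    · rintro ⟨hx, hxg⟩
      exact ⟨hxg ▸ mem_zpowers x, hx⟩
    · rintro ⟨hxg, hx⟩
      exact ⟨hx, eq_of_le_of_card_ge (zpowers_le.2 hxg) (by rw [Nat.card_zpowers,
        Nat.card_zpowers, hx, hg])⟩
  have hdvd : n ∣ Fintype.card (zpowers g) := by
    rw [← Nat.card_eq_fintype_card, Nat.card_zpowers, hg]
  rw [hfiber, card_map, IsCyclic.card_orderOf_eq_totient hdvd]

theorem IsCyclic.orderCount_eq {G : Type*} [Group G] [Finite G] [IsCyclic G] (m : ℕ) :
    orderCount G m = if m ∣ Nat.card G then m.totient else 0 := by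
  classical
  have := Fintype.ofFinite G
  split_ifs with hm
  · rw [orderCount, Nat.card_eq_fintype_card, Fintype.card_subtype,
      IsCyclic.card_orderOf_eq_totient (by rwa [← Nat.card_eq_fintype_card])]
  · exact Nat.card_eq_zero.2 <| .inl ⟨fun g => hm (g.2 ▸ orderOf_dvd_natCard g.1)⟩

theorem Nat.four_dvd_totient_mul_of_prime {p q : ℕ} (hp : p.Prime) (hq : q.Prime) (hp2 : p ≠ 2)
    (hq2 : q ≠ 2) (hpq : p ≠ q) : 4 ∣ (p * q).totient := by
  rw [Nat.totient_mul ((Nat.coprime_primes hp hq).2 hpq), Nat.totient_prime hp,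
    Nat.totient_prime hq]
  exact Nat.mul_dvd_mul (hp.even_sub_one hp2).two_dvd (hq.even_sub_one hq2).two_dvd

theorem Subgroup.card_comap_le {G G' : Type*} [Group G] [Group G'] [Finite G] (f : G →* G')
    (L : Subgroup G') [Finite L] : Nat.card (L.comap f) ≤ Nat.card f.ker * Nat.card L := by
  set g := f.subgroupComap L
  rw [← g.ker.card_mul_index, Subgroup.index_ker g]
  gcongr
  · exact Nat.card_le_card_of_injective
      (fun x => ⟨x.1.1, congrArg Subtype.val (MonoidHom.mem_ker.1 x.2)⟩)
      fun x y h => Subtype.ext <| Subtype.ext (congrArg Subtype.val h :)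
  · exact card_le_card_group _

section CommGroup

variable {A : Type*} [CommGroup A] [Finite A]

theorem card_ker_powMonoidHom_prime {p : ℕ} (hp : p.Prime) :
    Nat.card (powMonoidHom p : A →* A).ker = orderCount A p + 1 := by
  classical
  have := Fintype.ofFinite A
  have h := sum_card_orderOf_eq_card_pow_eq_one (G := A) hp.ne_zero
  rw [Nat.Prime.divisors hp, Finset.sum_pair hp.one_lt.ne] at h
  simp only [orderOf_eq_one_iff] at h
  rw [orderCount, Nat.card_eq_fintype_card, Fintype.card_subtype, Nat.card_eq_fintype_card,
    Fintype.card_subtype]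
  simp only [MonoidHom.mem_ker, powMonoidHom_apply, ← h]
  rw [add_comm]
  congr 1
  exact Finset.card_eq_one.2 ⟨1, by ext; simp⟩

theorem card_ker_powMonoidHom_mul_le (m n : ℕ) :
    Nat.card (powMonoidHom (m * n) : A →* A).ker ≤
      Nat.card (powMonoidHom m : A →* A).ker * Nat.card (powMonoidHom n : A →* A).ker := by
  have : (powMonoidHom (m * n) : A →* A).ker = (powMonoidHom n).ker.comap (powMonoidHom m) := by
    ext
    simp [pow_mul]
  rw [this]
  exact card_comap_le _ _

theorem isCyclic_of_card_ker_powMonoidHom_le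
    (h : ∀ p : ℕ, p.Prime → p ∣ Nat.card A → Nat.card (powMonoidHom p : A →* A).ker ≤ p) :
    IsCyclic A := by
  classical
  have := Fintype.ofFinite A
  have key : ∀ n, n ≠ 0 → Nat.card (powMonoidHom n : A →* A).ker ≤ n := by
    intro n
    induction n using Nat.recOnMul with
    | zero => simp
    | one => intro; simp
    | prime p hp =>
      intro _
      by_cases hpA : p ∣ Nat.card A
      · exact h p hp hpA
      · have hbot : (powMonoidHom p : A →* A).ker = ⊥ := (eq_bot_iff_forall _).2 fun x hx =>
          orderOf_eq_one_iff.1 <| Nat.eq_one_of_dvd_coprimes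
            ((Nat.Prime.coprime_iff_not_dvd hp).2 hpA) (orderOf_dvd_of_pow_eq_one hx)
            (orderOf_dvd_natCard x)
        rw [hbot, card_bot]
        exact hp.one_lt.le
    | mul a b ha hb =>
      intro hab
      obtain ⟨ha0, hb0⟩ := mul_ne_zero_iff.1 hab
      exact (card_ker_powMonoidHom_mul_le a b).trans (Nat.mul_le_mul (ha ha0) (hb hb0))
  refine isCyclic_of_card_pow_eq_one_le fun n hn => ?_
  simpa [Nat.card_eq_fintype_card, Fintype.card_subtype] using key n hn.ne'

theorem eq_of_prime_dvd_card_of_orderCount_dvd (hodd : Odd (Nat.card A))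
    (hA : ∀ n, Odd n → orderCount A n = 0 ∨ orderCount A n ∣ 2 * Nat.card A)
    {p q : ℕ} (hp : p.Prime) (hq : q.Prime) (hpA : p ∣ Nat.card A) (hqA : q ∣ Nat.card A) :
    p = q := by
  by_contra hpq
  have := Fact.mk hp
  have := Fact.mk hq
  have hp2 := hodd.ne_two_of_dvd_nat hpA
  have hq2 := hodd.ne_two_of_dvd_nat hqA
  obtain ⟨x, hx⟩ := exists_prime_orderOf_dvd_card' p hpA
  obtain ⟨y, hy⟩ := exists_prime_orderOf_dvd_card' q hqA
  have hxy : orderOf (x * y) = p * q := by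
    rw [(Commute.all x y).orderOf_mul_eq_mul_orderOf_of_coprime
      (by rw [hx, hy]; exact (Nat.coprime_primes hp hq).2 hpq), hx, hy]
  have hodd_pq : Odd (p * q) := (hp.odd_of_ne_two hp2).mul (hq.odd_of_ne_two hq2)
  have h4 : 4 ∣ 2 * Nat.card A :=
    (Nat.four_dvd_totient_mul_of_prime hp hq hp2 hq2 hpq).trans <|
      (totient_dvd_orderCount A _).trans <|
        (hA _ hodd_pq).resolve_left (orderCount_ne_zero_of_orderOf_eq hxy)
  obtain ⟨k, hk⟩ := hodd
  omega

theorem prime_eq_three_of_orderCount_dvd {p a : ℕ} (hp : p.Prime) (hp2 : p ≠ 2)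
    (hpA : p ∣ Nat.card A) (hdvd : orderCount A p ∣ 2 * p ^ a) :
    p = 3 ∧ Nat.card (powMonoidHom p : A →* A).ker = 3 := by
  have := Fact.mk hp
  set c := orderCount A p
  have hΩ := card_ker_powMonoidHom_prime (A := A) hp
  obtain ⟨x, hx⟩ := exists_prime_orderOf_dvd_card' p hpA
  have hpΩ : p ∣ c + 1 := by
    rw [← hΩ, ← hx, ← Nat.card_zpowers]
    exact card_dvd_of_le <| zpowers_le.2 <| by simp [pow_orderOf_eq_one]
  have hpc : ¬ p ∣ c := fun h => hp.one_lt.ne' (Nat.dvd_one.1 ((Nat.dvd_add_right h).1 hpΩ))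
  have hc2 : c ∣ 2 :=
    (Nat.Coprime.pow_left a ((hp.coprime_iff_not_dvd).2 hpc)).symm.dvd_of_dvd_mul_right hdvd
  have := hp.two_le.lt_of_ne' hp2
  have := Nat.le_of_dvd (by omega) hpΩ
  have := Nat.le_of_dvd two_pos hc2
  have : p = 3 := by omega
  omega

theorem card_eq_three_pow_and_isCyclic_of_orderCount_dvd (hodd : Odd (Nat.card A))
    (hA1 : Nat.card A ≠ 1)
    (hA : ∀ n, Odd n → orderCount A n = 0 ∨ orderCount A n ∣ 2 * Nat.card A) :
    ∃ a, 0 < a ∧ Nat.card A = 3 ^ a ∧ IsCyclic A := by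
  obtain ⟨p, hp, hpA⟩ := Nat.exists_prime_and_dvd hA1
  have hunique : ∀ {q}, q.Prime → q ∣ Nat.card A → q = p := fun hq hqA =>
    eq_of_prime_dvd_card_of_orderCount_dvd hodd hA hq hp hqA hpA
  set a := (Nat.card A).primeFactorsList.length
  have hcard : Nat.card A = p ^ a := Nat.eq_prime_pow_of_unique_prime_dvd Nat.card_pos.ne' hunique
  have hp2 := hodd.ne_two_of_dvd_nat hpA
  have hdvd : orderCount A p ∣ 2 * p ^ a := by
    have := Fact.mk hp
    obtain ⟨x, hx⟩ := exists_prime_orderOf_dvd_card' p hpA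
    rw [← hcard]
    exact (hA p (hp.odd_of_ne_two hp2)).resolve_left (orderCount_ne_zero_of_orderOf_eq hx)
  obtain ⟨rfl, hΩ⟩ := prime_eq_three_of_orderCount_dvd hp hp2 hpA hdvd
  refine ⟨a, Nat.pos_of_ne_zero fun ha => hA1 (by rw [hcard, ha, pow_zero]), hcard,
    isCyclic_of_card_ker_powMonoidHom_le fun q hq hqA => ?_⟩
  rw [hunique hq hqA, hΩ]

end CommGroup

namespace DihedralGroup

theorem orderOf_r_eq_addOrderOf {n : ℕ} [NeZero n] (i : ZMod n) :
    orderOf (r i) = addOrderOf i := by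
  rw [orderOf_r, ← ZMod.addOrderOf_coe _ (NeZero.ne n), ZMod.natCast_zmod_val]

theorem orderCount_eq {n : ℕ} [NeZero n] (m : ℕ) :
    orderCount (DihedralGroup n) m =
      (if m ∣ n then m.totient else 0) + if m = 2 then n else 0 := by
  rw [orderCount, Nat.card_congr <|
    (equivSum.symm.subtypeEquivOfSubtype (p := (orderOf · = m))).symm.trans Equiv.subtypeSum,
    Nat.card_sum]
  congr 1
  · have e : {i : ZMod n // orderOf (equivSum.symm (.inl i)) = m} ≃
        {x : Multiplicative (ZMod n) // orderOf x = m} :=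
      Multiplicative.ofAdd.subtypeEquiv fun i => by
        rw [orderOf_ofAdd_eq_addOrderOf, ← orderOf_r_eq_addOrderOf]
        rfl
    rw [Nat.card_congr e, ← orderCount, IsCyclic.orderCount_eq,
      Nat.card_congr Multiplicative.ofAdd.symm, Nat.card_zmod]
  · split_ifs with hm
    · subst hm
      exact (Nat.card_congr (Equiv.subtypeUnivEquiv fun i => orderOf_sr i)).trans (Nat.card_zmod n)
    · exact Nat.card_eq_zero.2 <| .inl ⟨fun i => hm (i.2.symm.trans (orderOf_sr i.1))⟩

theorem perfectOrderClasses_three_pow (k : ℕ) : PerfectOrderClasses (DihedralGroup (3 ^ k)) := by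
  have htot : (3 ^ k).totient ∣ 2 * 3 ^ k := by
    cases k with
    | zero => simp
    | succ k => exact ⟨3, by rw [Nat.totient_prime_pow_succ Nat.prime_three]; ring⟩
  intro m _
  rw [orderCount_eq, nat_card]
  split_ifs with hm hm2 hm2
  · exact absurd (hm2 ▸ hm) (Odd.pow (by decide : Odd 3)).not_two_dvd_nat
  · exact .inr <| by simpa using (Nat.totient_dvd_of_dvd hm).trans htot
  · exact .inr <| by simp
  · exact .inl rfl

end DihedralGroup

structure IsGeneralizedDihedral {G : Type*} [Group G] (K : Subgroup G) (s : G) : Prop where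
  notMem : s ∉ K
  mul_self : s * s = 1
  conj_eq_inv : ∀ k ∈ K, s * k * s⁻¹ = k⁻¹
  mem_or_mul_mem : ∀ g, g ∈ K ∨ g * s ∈ K

namespace IsGeneralizedDihedral

variable {G : Type*} [Group G] {K : Subgroup G} {s : G}

theorem inv_eq (hD : IsGeneralizedDihedral K s) : s⁻¹ = s :=
  inv_eq_of_mul_eq_one_right hD.mul_self

theorem mul_eq_inv_mul (hD : IsGeneralizedDihedral K s) {k : G} (hk : k ∈ K) :
    k * s = s * k⁻¹ := by
  rw [← hD.conj_eq_inv k hk, hD.inv_eq, ← mul_assoc, ← mul_assoc, hD.mul_self, one_mul]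

theorem isMulCommutative (hD : IsGeneralizedDihedral K s) : IsMulCommutative K :=
  IsMulCommutative.of_setLike_mul_comm fun a ha b hb => by
    have h := hD.conj_eq_inv _ (mul_mem ha hb)
    rw [show s * (a * b) * s⁻¹ = s * a * s⁻¹ * (s * b * s⁻¹) by group, hD.conj_eq_inv a ha,
      hD.conj_eq_inv b hb, mul_inv_rev] at h
    simpa using (congrArg (·⁻¹) h).symm

theorem orderOf_eq_two (hD : IsGeneralizedDihedral K s) {g : G} (hg : g ∉ K) :
    orderOf g = 2 := by
  refine orderOf_eq_prime ?_ fun h => hg (h ▸ K.one_mem)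
  obtain ⟨k, hk, rfl⟩ : ∃ k ∈ K, g = k * s⁻¹ :=
    ⟨g * s, (hD.mem_or_mul_mem g).resolve_left hg, by group⟩
  calc (k * s⁻¹) ^ 2 = k * (s⁻¹ * k * s⁻¹) := by rw [sq]; group
    _ = 1 := by nth_rw 1 [hD.inv_eq]; rw [hD.conj_eq_inv k hk, mul_inv_cancel]

theorem orderCount_eq (hD : IsGeneralizedDihedral K s) {n : ℕ} (hn : Odd n) :
    orderCount K n = orderCount G n :=
  K.orderCount_eq_of_forall_mem fun g hg => by_contra fun hgK => by
    rw [hD.orderOf_eq_two hgK] at hg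
    exact (Nat.not_odd_iff_even.2 even_two) (hg ▸ hn)

theorem index_eq_two (hD : IsGeneralizedDihedral K s) : K.index = 2 :=
  index_eq_two_iff.2 ⟨s, fun g => by
    rcases hD.mem_or_mul_mem g with hg | hg
    · exact .inr ⟨hg, fun hgs => hD.notMem ((K.mul_mem_cancel_left hg).1 hgs)⟩
    · exact .inl ⟨hg, fun hgK => hD.notMem ((K.mul_mem_cancel_left hgK).1 hg)⟩⟩

theorem card_eq (hD : IsGeneralizedDihedral K s) : Nat.card G = 2 * Nat.card K := by
  rw [← K.card_mul_index, hD.index_eq_two, mul_comm]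

open DihedralGroup Multiplicative in
theorem nonempty_mulEquiv_dihedralGroup [Finite G] [IsCyclic K]
    (hD : IsGeneralizedDihedral K s) : Nonempty (G ≃* DihedralGroup (Nat.card K)) := by
  set ψ : Multiplicative (ZMod (Nat.card K)) →* G :=
    K.subtype.comp (zmodCyclicMulEquiv inferInstance).toMonoidHom
  have hψK : ∀ x, ψ x ∈ K := fun x => Subtype.property _
  have hψ : Function.Injective ψ :=
    K.subtype_injective.comp (zmodCyclicMulEquiv inferInstance).injective
  let F : DihedralGroup (Nat.card K) → G
    | r i => ψ (ofAdd i)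
    | sr i => s * ψ (ofAdd i)
  have hF : ∀ x y, F (x * y) = F x * F y := by
    rintro (i | i) (j | j)
    · simp only [F, r_mul_r, ofAdd_add, map_mul]
    · simp only [F, r_mul_sr, sub_eq_neg_add, ofAdd_add, ofAdd_neg, map_mul, map_inv]
      rw [← mul_assoc (ψ _), hD.mul_eq_inv_mul (hψK _), mul_assoc]
    · simp only [F, sr_mul_r, ofAdd_add, map_mul, mul_assoc]
    · simp only [F, sr_mul_sr, sub_eq_neg_add, ofAdd_add, ofAdd_neg, map_mul, map_inv]
      rw [mul_assoc s, ← mul_assoc (ψ _), hD.mul_eq_inv_mul (hψK _), ← mul_assoc s,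
        ← mul_assoc s, hD.mul_self, one_mul]
  have hFinj : Function.Injective (MonoidHom.mk' F hF) := by
    refine (injective_iff_map_eq_one _).2 ?_
    rintro (i | i) h
    · rw [one_def, ← ofAdd_eq_one.1 (hψ (h.trans (map_one ψ).symm))]
    · refine absurd ?_ hD.notMem
      rw [eq_inv_of_mul_eq_one_left h]
      exact inv_mem (hψK _)
  have hcard : Nat.card (DihedralGroup (Nat.card K)) = Nat.card G := by
    rw [nat_card, hD.card_eq]
  exact ⟨(MulEquiv.ofBijective _
    ((Nat.bijective_iff_injective_and_card _).2 ⟨hFinj, hcard⟩)).symm⟩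

end IsGeneralizedDihedral

theorem IsFrobeniusWith.exists_isGeneralizedDihedral {G : Type*} [Group G] [Finite G]
    {K H : Subgroup G} (hF : IsFrobeniusWith K H) (hH : Nat.card H = 2) :
    ∃ s, IsGeneralizedDihedral K s ∧ Odd (Nat.card K) := by
  obtain ⟨-, -, hKn, hKH, hcover, hfpf⟩ := hF
  obtain ⟨⟨s, hsH⟩, hs1, hsH_unique⟩ := (Nat.card_eq_two_iff' (1 : H)).1 hH
  replace hs1 : s ≠ 1 := fun h => hs1 (Subtype.ext h)
  have hH_eq : ∀ y ∈ H, y = 1 ∨ y = s := fun y hy => (em (y = 1)).imp_right fun hy1 =>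
    congrArg Subtype.val (hsH_unique ⟨y, hy⟩ (hy1 ∘ congrArg Subtype.val))
  have hss : s * s = 1 := by
    have := congrArg Subtype.val (pow_card_eq_one' (G := H) (x := ⟨s, hsH⟩))
    rwa [hH, sq] at this
  set φ : MulAut K := MulAut.conjNormal s
  have hφ : ∀ k : K, (φ k : G) = s * k * s⁻¹ := MulAut.conjNormal_apply s
  have hφfree : MonoidHom.FixedPointFree φ := fun k hk => by
    by_contra hk1
    exact hfpf s hsH hs1 k k.2 (fun h => hk1 (Subtype.ext h)) (by rw [← hφ, hk])
  have hφinv : Function.Involutive φ := fun k => by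
    rw [← MulAut.mul_apply, ← map_mul, hss, map_one, MulAut.one_apply]
  refine ⟨s, ⟨fun hsK => hs1 ?_, hss, fun k hk => ?_, fun g => ?_⟩,
    hφfree.odd_card_of_involutive hφinv⟩
  · exact Subgroup.mem_bot.1 (hKH ▸ mem_inf.2 ⟨hsK, hsH⟩)
  · rw [← hφ ⟨k, hk⟩, hφfree.coe_eq_inv_of_involutive hφinv]
    rfl
  · obtain ⟨k, hk, y, hy, rfl⟩ := hcover g
    rcases hH_eq y hy with rfl | rfl
    · exact .inl (by rwa [mul_one])
    · exact .inr (by rwa [mul_assoc, hss, mul_one])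

/-- A finite Frobenius group whose Frobenius complement has order 2 has perfect order
classes iff it is a dihedral group of degree a power of 3. -/
theorem frobenius_order_two_complement_perfectOrderClasses_iff
    {G : Type*} [Group G] [Fintype G] (K H : Subgroup G)
    (hFrob : IsFrobeniusWith K H) (hH : Nat.card H = 2) :
    PerfectOrderClasses G ↔
      ∃ k : ℕ, 0 < k ∧ Nonempty (G ≃* DihedralGroup (3 ^ k)) := by
  obtain ⟨s, hD, hodd⟩ := hFrob.exists_isGeneralizedDihedral hH
  refine ⟨fun hG => ?_, fun ⟨k, _, ⟨e⟩⟩ =>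
    (DihedralGroup.perfectOrderClasses_three_pow k).of_mulEquiv e⟩
  -- turns `K` into a `CommGroup` through the scoped instance
  have := hD.isMulCommutative
  have hK : ∀ n, Odd n → orderCount K n = 0 ∨ orderCount K n ∣ 2 * Nat.card K := fun n hn => by
    rw [hD.orderCount_eq hn, ← hD.card_eq]
    exact hG n hn.pos
  obtain ⟨a, ha, hcard, _⟩ := card_eq_three_pow_and_isCyclic_of_orderCount_dvd hodd
    (fun h => hFrob.1 (card_eq_one.1 h)) hK
  obtain ⟨e⟩ := hD.nonempty_mulEquiv_dihedralGroup
  rw [hcard] at e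
  exact ⟨a, ha, ⟨e⟩⟩
end

section
/- Let G be a finite Frobenius group with Frobenius kernel K and Frobenius complement H. (1) For every g ∈ K, the number of elements of G whose order equals the order of g is equal to the number of elements of K whose order equals the order of g. (2) For every g ∈ G with g ∉ K, the number of elements of G whose order equals the order of g is equal to |K| times the number of elements of H whose order equals the order of g. -/
/-!
Every element outside `K` is `K`-conjugate to a nontrivial element of `H`, and the pair
(conjugator in `K`, element of `H`) is unique: if `k ∈ K` conjugates `h ∈ H \ {1}` into `H`,
the commutator `k h k⁻¹ h⁻¹` lies in `K ⊓ H = 1`, so `h` fixes `k`, forcing `k = 1`.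
An element of `H` of prime order `p` acts on `K` with `1` as its only fixed point, so
`|K| ≡ 1 [MOD p]`; hence `|K|` and `|H|` are coprime, and `x ∈ K` exactly when `orderOf x`
divides `|K|`. So each order class lies either inside `K` or outside it, and in the latter case
`(a, h) ↦ a h a⁻¹` is a bijection from `K × {h ∈ H | orderOf h = n}` onto it.
-/

theorem orderOf_conj {G : Type*} [Group G] (a x : G) : orderOf (a * x * a⁻¹) = orderOf x :=
  (MulAut.conj a).orderOf_eq x

theorem Subgroup.card_modEq_one_of_forall_conj_eq_self {G : Type*} [Group G] {N : Subgroup G}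
    [N.Normal] [Finite N] {g : G} {p : ℕ} [Fact p.Prime] (hg : orderOf g = p)
    (hfix : ∀ k ∈ N, g * k * g⁻¹ = k → k = 1) : Nat.card N ≡ 1 [MOD p] := by
  let Z := Subgroup.zpowers (ConjAct.toConjAct g)
  have hZ : IsPGroup p Z := IsPGroup.of_card (n := 1) <| by
    rw [Nat.card_zpowers, pow_one, ← hg]
    exact (MulEquiv.orderOf_eq ConjAct.toConjAct g)
  have hfixed : MulAction.fixedPoints Z N = {1} := by
    ext k
    refine ⟨fun hk => Subtype.ext (hfix k k.2 ?_), ?_⟩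
    · exact congrArg Subtype.val (hk ⟨_, Subgroup.mem_zpowers _⟩)
    · rintro rfl z
      exact smul_one (z : ConjAct G)
  simpa [hfixed] using hZ.card_modEq_card_fixedPoints N

namespace IsFrobeniusWith

variable {G : Type*} [Group G] {K H : Subgroup G}

theorem normal (hF : IsFrobeniusWith K H) : K.Normal := hF.2.2.1

theorem eq_one_of_mem_of_mem (hF : IsFrobeniusWith K H) {x : G} (hK : x ∈ K) (hH : x ∈ H) :
    x = 1 := by
  obtain ⟨-, -, -, hKH, -⟩ := hF
  simpa [hKH] using Subgroup.mem_inf.2 ⟨hK, hH⟩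

theorem eq_one_of_conj_eq_self (hF : IsFrobeniusWith K H) {h k : G} (hh : h ∈ H) (hk : k ∈ K)
    (hne : h ≠ 1) (hfix : h * k * h⁻¹ = k) : k = 1 := by
  obtain ⟨-, -, -, -, -, hfpf⟩ := hF
  by_contra hk1
  exact hfpf h hh hne k hk hk1 hfix

theorem eq_one_of_conj_mem (hF : IsFrobeniusWith K H) {k h : G} (hk : k ∈ K) (hh : h ∈ H)
    (hne : h ≠ 1) (hconj : k * h * k⁻¹ ∈ H) : k = 1 := by
  have hcommK : k * (h * k⁻¹ * h⁻¹) ∈ K :=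
    K.mul_mem hk (hF.normal.conj_mem _ (K.inv_mem hk) h)
  have hcommH : k * h * k⁻¹ * h⁻¹ ∈ H := H.mul_mem hconj (H.inv_mem hh)
  have hcomm : k * (h * k⁻¹ * h⁻¹) = 1 :=
    hF.eq_one_of_mem_of_mem hcommK (by simpa only [mul_assoc] using hcommH)
  have hfix : h * k⁻¹ * h⁻¹ = k⁻¹ := eq_inv_of_mul_eq_one_right hcomm
  exact inv_eq_one.1 (hF.eq_one_of_conj_eq_self hh (K.inv_mem hk) hne hfix)

theorem eq_and_eq_of_conj_eq_conj (hF : IsFrobeniusWith K H) {a b h₁ h₂ : G} (ha : a ∈ K)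
    (hb : b ∈ K) (hh₁ : h₁ ∈ H) (hh₂ : h₂ ∈ H) (hne : h₁ ≠ 1)
    (heq : a * h₁ * a⁻¹ = b * h₂ * b⁻¹) :
    a = b ∧ h₁ = h₂ := by
  have hconj : (b⁻¹ * a) * h₁ * (b⁻¹ * a)⁻¹ = h₂ := by
    rw [← mul_left_cancel_iff (a := b), ← mul_right_cancel_iff (a := b⁻¹)]
    simpa [mul_assoc] using heq
  have hba : b⁻¹ * a = 1 :=
    hF.eq_one_of_conj_mem (K.mul_mem (K.inv_mem hb) ha) hh₁ hne (hconj ▸ hh₂)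
  rw [hba] at hconj
  exact ⟨(inv_mul_eq_one.1 hba).symm, by simpa using hconj⟩

variable [Finite G]

theorem exists_conj_eq_of_notMem (hF : IsFrobeniusWith K H) {x : G} (hx : x ∉ K) :
    ∃ a ∈ K, ∃ h ∈ H, h ≠ 1 ∧ a * h * a⁻¹ = x := by
  obtain ⟨k, hk, h, hh, rfl⟩ := hF.2.2.2.2.1 x
  have hne : h ≠ 1 := by
    rintro rfl
    exact hx (by simpa using hk)
  let f : K → K := fun a => ⟨a * h * (a : G)⁻¹ * h⁻¹, by
    simpa only [mul_assoc] using K.mul_mem a.2 (hF.normal.conj_mem _ (K.inv_mem a.2) h)⟩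
  have hf : Function.Injective f := fun a b hab => Subtype.ext <|
    (hF.eq_and_eq_of_conj_eq_conj a.2 b.2 hh hh hne (mul_right_cancel (congrArg Subtype.val hab))).1
  obtain ⟨a, ha⟩ := Finite.surjective_of_injective hf ⟨k, hk⟩
  exact ⟨a, a.2, h, hh, hne, mul_inv_eq_iff_eq_mul.1 (congrArg Subtype.val ha)⟩

theorem coprime_card (hF : IsFrobeniusWith K H) : (Nat.card K).Coprime (Nat.card H) := by
  by_contra hnc
  obtain ⟨p, hp, hpK, hpH⟩ := Nat.Prime.not_coprime_iff_dvd.1 hnc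
  have := Fact.mk hp
  have := hF.normal
  obtain ⟨h, hh⟩ := exists_prime_orderOf_dvd_card' p hpH
  have hne : (h : G) ≠ 1 := by
    intro h1
    rw [← Subgroup.orderOf_coe, h1, orderOf_one] at hh
    exact hp.one_lt.ne hh
  have hK1 : Nat.card K ≡ 1 [MOD p] := K.card_modEq_one_of_forall_conj_eq_self
    (by rw [Subgroup.orderOf_coe, hh]) fun k hk => hF.eq_one_of_conj_eq_self h.2 hk hne
  exact hp.not_dvd_one (Nat.modEq_zero_iff_dvd.1 (hK1.symm.trans (Nat.modEq_zero_iff_dvd.2 hpK)))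

theorem mem_iff_orderOf_dvd_card (hF : IsFrobeniusWith K H) {x : G} :
    x ∈ K ↔ orderOf x ∣ Nat.card K := by
  refine ⟨K.orderOf_dvd_natCard, fun hdvd => ?_⟩
  by_contra hx
  obtain ⟨a, -, h, hh, -, rfl⟩ := hF.exists_conj_eq_of_notMem hx
  rw [orderOf_conj] at hdvd
  have h1 : orderOf h = 1 :=
    Nat.eq_one_of_dvd_coprimes hF.coprime_card hdvd (H.orderOf_dvd_natCard hh)
  exact hx (by simp [orderOf_eq_one_iff.1 h1])

theorem mem_iff_of_orderOf_eq (hF : IsFrobeniusWith K H) {x y : G} (hxy : orderOf x = orderOf y) :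
    x ∈ K ↔ y ∈ K := by
  rw [hF.mem_iff_orderOf_dvd_card, hF.mem_iff_orderOf_dvd_card, hxy]

theorem card_subtype_eq_card_mul (hF : IsFrobeniusWith K H) {P : G → Prop}
    (hP : ∀ a x, P (a * x * a⁻¹) ↔ P x) (hPK : ∀ x, P x → x ∉ K) :
    Nat.card {x // P x} = Nat.card K * Nat.card {h : H // P h} := by
  rw [← Nat.card_prod]
  let conj : K × {h : H // P h} → {x // P x} :=
    fun p => ⟨p.1 * p.2.1 * (p.1 : G)⁻¹, (hP _ _).2 p.2.2⟩
  refine Nat.card_congr (Equiv.ofBijective conj ⟨?_, ?_⟩).symm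
  · rintro ⟨a, h₁, hP₁⟩ ⟨b, h₂, _⟩ hconj
    have hne : (h₁ : G) ≠ 1 := fun h1 => hPK _ hP₁ (h1 ▸ K.one_mem)
    obtain ⟨hab, hh⟩ :=
      hF.eq_and_eq_of_conj_eq_conj a.2 b.2 h₁.2 h₂.2 hne (congrArg Subtype.val hconj)
    exact Prod.ext (Subtype.ext hab) (Subtype.ext (Subtype.ext hh))
  · rintro ⟨x, hx⟩
    obtain ⟨a, ha, h, hh, -, rfl⟩ := hF.exists_conj_eq_of_notMem (hPK x hx)
    exact ⟨⟨⟨a, ha⟩, ⟨⟨h, hh⟩, (hP a h).1 hx⟩⟩, rfl⟩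

end IsFrobeniusWith

/-- Order-class counting in a finite Frobenius group: order classes of kernel elements are
counted inside the kernel, and the order class of an element outside the kernel has size
`|K|` times the size of the corresponding order class of the complement. -/
theorem frobenius_orderCount
    {G : Type*} [Group G] [Fintype G] (K H : Subgroup G)
    (hFrob : IsFrobeniusWith K H) :
    (∀ g : G, g ∈ K →
      Nat.card {x : G // orderOf x = orderOf g} =
        Nat.card {x : K // orderOf (x : G) = orderOf g}) ∧
    (∀ g : G, g ∉ K →
      Nat.card {x : G // orderOf x = orderOf g} =
        Nat.card K * Nat.card {x : H // orderOf (x : G) = orderOf g}) := by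
  refine ⟨fun g hg => ?_, fun g hg => ?_⟩
  · have hmem {x : G} (hx : orderOf x = orderOf g) : x ∈ K :=
      (hFrob.mem_iff_of_orderOf_eq hx).2 hg
    exact (Nat.card_congr (Equiv.subtypeSubtypeEquivSubtype hmem)).symm
  · refine hFrob.card_subtype_eq_card_mul (fun a x => by rw [orderOf_conj]) fun x hx hxK => ?_
    exact hg ((hFrob.mem_iff_of_orderOf_eq hx).1 hxK)
end

section
/- Let p and q be prime numbers, both greater than 5, and let r and m be positive integers with r > 1. Suppose that q - 1 divides 240, but that q does not divide 240. Then p^r - 1 = 240·q^m holds only for (p, r, q, m) = (11, 4, 61, 1) or (p, r, q, m) = (41, 2, 7, 1). -/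
/-!
If `r = 2s` is even, the factors `p^s - 1` and `p^s + 1` of `240 q^m` cannot both be divisible
by the odd prime `q`, so one of them divides `240`. Hence `p^s ≤ 241`, and as `q` is one of the
primes `7, 11, 13, 17, 31, 41, 61, 241` (those `q > 5` with `q - 1 ∣ 240`), only finitely many
cases remain.

If `r` is odd, then `p^r ≡ 1 (mod 240)` forces `p ≡ 1 (mod 240)`, because `φ(240) = 2^6` is
coprime to `r`. Since `p - 1 ∣ p^r - 1`, this gives `p - 1 = 240 q^j`. For `j > 0`, lifting the
exponent gives `q^(m-j) ∣ r`, too small for `(p^r - 1)/(p - 1) = q^(m-j)`. For `j = 0`,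
`p = 241`, and the order of `241` modulo `q` divides `240` but not `15` unless `q = 61`, so it is
even, contradicting `241^r ≡ 1 (mod q)`. Modulo `61` the order is `5`, so `5 ∣ r` and
`5 · 240 ∣ 241^5 - 1 ∣ 241^r - 1`, which is impossible as `5 ∤ 61^m`.
-/

theorem Nat.Prime.coprime_240 {p : ℕ} (hp : p.Prime) (hp5 : 5 < p) : p.Coprime 240 := by
  have h : ∀ ℓ : ℕ, ℓ.Prime → ℓ ≤ 5 → p.Coprime ℓ := fun ℓ hℓ hle =>
    (Nat.coprime_primes hp hℓ).2 (by omega)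
  exact ((h 2 Nat.prime_two (by norm_num)).pow_right 4 |>.mul_right
    (h 3 Nat.prime_three (by norm_num))).mul_right (h 5 Nat.prime_five le_rfl)

theorem eq_or_eq_of_prime_of_sub_one_dvd_240 {q : ℕ} (hq : q.Prime) (hq5 : 5 < q)
    (hq1 : q - 1 ∣ 240) :
    q = 7 ∨ q = 11 ∨ q = 13 ∨ q = 17 ∨ q = 31 ∨ q = 41 ∨ q = 61 ∨ q = 241 := by
  obtain ⟨d, hd, rfl⟩ : ∃ d ∈ Nat.divisors 240, q = d + 1 :=
    ⟨q - 1, Nat.mem_divisors.2 ⟨hq1, by norm_num⟩, by omega⟩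
  rw [show Nat.divisors 240 = {1, 2, 3, 4, 5, 6, 8, 10, 12, 15, 16, 20, 24, 30, 40, 48, 60, 80,
    120, 240} by decide] at hd
  fin_cases hd <;> first | decide | omega | norm_num at hq

theorem pow_eq_one_of_odd_of_pow_two_pow_mul_eq_one {M : Type*} [Monoid M] {x : M} {r a k : ℕ}
    (hr : Odd r) (hxr : x ^ r = 1) (hx : x ^ (2 ^ a * k) = 1) : x ^ k = 1 := by
  have hcop : Nat.Coprime (2 ^ a) r := (Nat.coprime_two_left.2 hr).pow_left a
  have hgcd : x ^ (Nat.gcd (2 ^ a * k) r) = 1 := pow_gcd_eq_one.2 ⟨hx, hxr⟩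
  rw [Nat.Coprime.gcd_mul_left_cancel k hcop] at hgcd
  obtain ⟨c, hc⟩ := Nat.gcd_dvd_left k r
  rw [hc, pow_mul, hgcd, one_pow]

theorem Nat.ModEq.eq_one_of_pow_of_odd {n p r a : ℕ} (hφ : n.totient = 2 ^ a) (hp : p.Coprime n)
    (hr : Odd r) (h : p ^ r ≡ 1 [MOD n]) : p ≡ 1 [MOD n] := by
  have hx : (p : ZMod n) ^ r = 1 := by exact_mod_cast (ZMod.natCast_eq_natCast_iff _ _ _).2 h
  have hxφ : (p : ZMod n) ^ (2 ^ a * 1) = 1 := by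
    rw [mul_one, ← hφ]
    exact_mod_cast (ZMod.natCast_eq_natCast_iff _ _ _).2 (Nat.ModEq.pow_totient hp)
  have hx1 := pow_eq_one_of_odd_of_pow_two_pow_mul_eq_one hr hx hxφ
  rwa [pow_one, ← Nat.cast_one, ZMod.natCast_eq_natCast_iff] at hx1

theorem dvd_or_dvd_of_mul_add_two_eq {q z c m : ℕ} (hq : q.Prime) (hq2 : q ≠ 2)
    (h : z * (z + 2) = c * q ^ m) : z ∣ c ∨ z + 2 ∣ c := by
  have hboth : ¬ (q ∣ z ∧ q ∣ z + 2) := fun ⟨h1, h2⟩ =>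
    hq2 ((Nat.prime_dvd_prime_iff_eq hq Nat.prime_two).1 ((Nat.dvd_add_right h1).1 h2))
  rcases not_and_or.1 hboth with h1 | h2
  · exact .inl ((((hq.coprime_iff_not_dvd).2 h1).pow_left m).symm.dvd_of_dvd_mul_right
      (Dvd.intro _ h))
  · exact .inr ((((hq.coprime_iff_not_dvd).2 h2).pow_left m).symm.dvd_of_dvd_mul_right
      (Dvd.intro_left _ h))

theorem sq_eq_240_mul_pow_add_one {x q m : ℕ} (hq : q.Prime) (hq5 : 5 < q) (hq1 : q - 1 ∣ 240)
    (hm : m ≠ 0) (hx : x ≤ 241) (h : x ^ 2 = 240 * q ^ m + 1) :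
    (x = 41 ∧ q = 7 ∧ m = 1) ∨ (x = 121 ∧ q = 61 ∧ m = 1) := by
  have hq' := eq_or_eq_of_prime_of_sub_one_dvd_240 hq hq5 hq1
  have hm2 : m ≤ 2 := by
    by_contra! hm3
    have : 7 ^ 3 ≤ q ^ m :=
      (Nat.pow_le_pow_left (by omega) 3).trans (Nat.pow_le_pow_right (by omega) hm3)
    nlinarith
  obtain rfl : x = Nat.sqrt (240 * q ^ m + 1) := by rw [← h, Nat.sqrt_eq']
  interval_cases m <;> rcases hq' with rfl | rfl | rfl | rfl | rfl | rfl | rfl | rfl <;>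
    revert h <;> norm_num

theorem sub_one_mul_lt_pow_sub_one {p r : ℕ} (hp : 2 ≤ p) (hr : 2 ≤ r) :
    (p - 1) * r < p ^ r - 1 := by
  obtain ⟨k, rfl⟩ : ∃ k, r = k + 2 := ⟨r - 2, by omega⟩
  have hlt : k + 1 < p ^ (k + 1) := Nat.lt_pow_self hp
  have hpow : p ^ (k + 2) = p * p ^ (k + 1) := by ring
  have : p ≤ p ^ (k + 1) := Nat.le_self_pow (by omega) p
  zify [Nat.one_le_pow _ _ (by omega : 0 < p), (by omega : 1 ≤ p)] at *
  nlinarith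

theorem pow_sub_one_ne_of_sub_one_eq {p q r c j m : ℕ} (hq : q.Prime) (hq2 : q ≠ 2)
    (hqc : ¬ q ∣ c) (hj : j ≠ 0) (hr : 2 ≤ r) (hp1 : p - 1 = c * q ^ j) :
    p ^ r - 1 ≠ c * q ^ m := by
  intro h
  have := Fact.mk hq
  have hc : c ≠ 0 := by rintro rfl; exact hqc (dvd_zero q)
  have hp : 2 ≤ p := by
    have : 0 < c * q ^ j := Nat.mul_pos (Nat.pos_of_ne_zero hc) (pow_pos hq.pos j)
    omega
  have hqp1 : q ∣ p - 1 := hp1 ▸ Dvd.dvd.mul_left (dvd_pow_self q hj) c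
  have hqp : ¬ q ∣ p := fun hqp =>
    hq.not_dvd_one (by simpa [Nat.sub_sub_self (by omega : 1 ≤ p)] using Nat.dvd_sub hqp hqp1)
  have hval : ∀ n, padicValNat q (c * q ^ n) = n := fun n => by
    rw [padicValNat.mul hc (pow_ne_zero _ hq.ne_zero), padicValNat.prime_pow,
      padicValNat.eq_zero_of_not_dvd hqc, zero_add]
  have hlte := padicValNat.pow_sub_pow (hq.odd_of_ne_two hq2) (by omega : 1 < p)
    (by simpa using hqp1) hqp (by omega : r ≠ 0) (y := 1)
  rw [one_pow, h, hp1, hval, hval] at hlte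
  have hle : q ^ (m - j) ≤ r := by
    rw [show m - j = padicValNat q r by omega]
    exact Nat.le_of_dvd (by omega) pow_padicValNat_dvd
  have : p ^ r - 1 ≤ (p - 1) * r := by
    calc p ^ r - 1 = c * q ^ j * q ^ (m - j) := by
          rw [h, mul_assoc, ← pow_add]; congr 2; omega
      _ ≤ (p - 1) * r := by rw [hp1]; exact Nat.mul_le_mul_left _ hle
  exact absurd this (not_le.2 (sub_one_mul_lt_pow_sub_one hp hr))

theorem pow_241_sub_one_ne_240_mul_pow_of_odd {q r m : ℕ} (hq : q.Prime) (hq5 : 5 < q)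
    (hq1 : q - 1 ∣ 240) (hm : m ≠ 0) (hr : Odd r) : 241 ^ r - 1 ≠ 240 * q ^ m := by
  intro h
  have hx : (241 : ZMod q) ^ r = 1 := by
    have h' : 241 ^ r = 240 * q ^ m + 1 := by have := Nat.one_le_pow r 241 (by norm_num); omega
    simpa [ZMod.natCast_self, zero_pow hm] using congrArg (Nat.cast : ℕ → ZMod q) h'
  have hx240 : (241 : ZMod q) ^ (2 ^ 4 * 15) = 1 := by
    have := Fact.mk hq
    have hx0 : (241 : ZMod q) ≠ 0 := fun h0 => by simp [h0, zero_pow hr.pos.ne'] at hx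
    obtain ⟨c, hc⟩ := hq1
    rw [show 2 ^ 4 * 15 = (q - 1) * c by rw [← hc]; norm_num, pow_mul,
      ZMod.pow_card_sub_one_eq_one hx0, one_pow]
  have hx15 := pow_eq_one_of_odd_of_pow_two_pow_mul_eq_one hr hx hx240
  obtain rfl : q = 61 := by
    rcases eq_or_eq_of_prime_of_sub_one_dvd_240 hq hq5 hq1 with
      rfl | rfl | rfl | rfl | rfl | rfl | rfl | rfl <;> first | rfl | revert hx15; decide
  have := Fact.mk Nat.prime_five
  obtain ⟨k, rfl⟩ : 5 ∣ r :=
    orderOf_eq_prime (by decide : (241 : ZMod 61) ^ 5 = 1) (by decide) ▸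
      orderOf_dvd_of_pow_eq_one hx
  have h1200 : 240 * 5 ∣ 240 * 61 ^ m := h ▸ (by norm_num : 1200 ∣ 241 ^ 5 - 1).trans (by
    rw [pow_mul]; simpa only [one_pow] using Nat.sub_dvd_pow_sub_pow (241 ^ 5) 1 k)
  have h561 : 5 ∣ 61 :=
    Nat.prime_five.dvd_of_dvd_pow (Nat.dvd_of_mul_dvd_mul_left (by norm_num) h1200)
  norm_num at h561

theorem dio240_of_even {p q r m : ℕ} (hp : p.Prime) (hq : q.Prime) (hq5 : 5 < q)
    (hq1 : q - 1 ∣ 240) (hm : m ≠ 0) (hr : Even r) (h : p ^ r - 1 = 240 * q ^ m) :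
    (p = 11 ∧ r = 4 ∧ q = 61 ∧ m = 1) ∨ (p = 41 ∧ r = 2 ∧ q = 7 ∧ m = 1) := by
  obtain ⟨s, rfl⟩ := hr
  obtain ⟨z, hz⟩ : ∃ z, p ^ s = z + 1 :=
    ⟨p ^ s - 1, (Nat.succ_pred_eq_of_pos (pow_pos hp.pos s)).symm⟩
  have hsq : (z + 1) ^ 2 = 240 * q ^ m + 1 := by
    have := Nat.one_le_pow (s + s) p hp.pos
    rw [← hz, ← pow_mul, mul_two]; omega
  have hz240 : z + 1 ≤ 241 := by
    have hfac : z * (z + 2) = 240 * q ^ m := by linarith [hsq]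
    rcases dvd_or_dvd_of_mul_add_two_eq hq (by omega) hfac with hd | hd
    · have := Nat.le_of_dvd (by norm_num) hd; omega
    · have := Nat.le_of_dvd (by norm_num) hd; omega
  rcases sq_eq_240_mul_pow_add_one hq hq5 hq1 hm hz240 hsq with
    ⟨hx, rfl, rfl⟩ | ⟨hx, rfl, rfl⟩
  · obtain ⟨rfl, rfl⟩ := (Nat.Prime.pow_eq_iff (by norm_num)).1 (hz.trans hx)
    right; simp
  · have hs : s ≠ 0 := by rintro rfl; simp at hz; omega
    obtain ⟨rfl, rfl⟩ :=
      hp.pow_inj' (by norm_num) hs two_ne_zero (hz.trans (by omega) : p ^ s = 11 ^ 2)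
    left; simp

theorem pow_sub_one_ne_240_mul_pow_of_odd {p q r m : ℕ} (hp : p.Prime) (hp5 : 5 < p)
    (hq : q.Prime) (hq5 : 5 < q) (hq1 : q - 1 ∣ 240) (hm : m ≠ 0) (hr1 : 1 < r) (hr : Odd r) :
    p ^ r - 1 ≠ 240 * q ^ m := by
  intro h
  have hmod : p ^ r ≡ 1 [MOD 240] :=
    ((Nat.modEq_iff_dvd' (Nat.one_le_pow r p hp.pos)).2 ⟨q ^ m, h⟩).symm
  obtain ⟨u, hu⟩ : 240 ∣ p - 1 := (Nat.modEq_iff_dvd' hp.one_le).1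
    (Nat.ModEq.eq_one_of_pow_of_odd (a := 6) (by decide) (hp.coprime_240 hp5) hr hmod).symm
  have hdvd : u ∣ q ^ m := Nat.dvd_of_mul_dvd_mul_left (by norm_num : 0 < 240)
    (hu ▸ h ▸ by simpa only [one_pow] using Nat.sub_dvd_pow_sub_pow p 1 r)
  obtain ⟨j, -, rfl⟩ := (Nat.dvd_prime_pow hq).1 hdvd
  rcases eq_or_ne j 0 with rfl | hj
  · obtain rfl : p = 241 := by rw [pow_zero, mul_one] at hu; omega
    exact pow_241_sub_one_ne_240_mul_pow_of_odd hq hq5 hq1 hm hr h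
  · exact pow_sub_one_ne_of_sub_one_eq hq (by omega)
      ((hq.coprime_iff_not_dvd).1 (hq.coprime_240 hq5)) hj hr1 hu h

theorem dio240_general (p q r m : ℕ) (hp : p.Prime) (hq : q.Prime)
    (hp5 : 5 < p) (hq5 : 5 < q) (hr : 1 < r) (hm : 0 < m)
    (hq1 : (q - 1) ∣ 240)
    (heq : p ^ r - 1 = 240 * q ^ m) :
    (p = 11 ∧ r = 4 ∧ q = 61 ∧ m = 1) ∨ (p = 41 ∧ r = 2 ∧ q = 7 ∧ m = 1) := by
  rcases Nat.even_or_odd r with heven | hodd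
  · exact dio240_of_even hp hq hq5 hq1 hm.ne' heven heq
  · exact absurd heq (pow_sub_one_ne_240_mul_pow_of_odd hp hp5 hq hq5 hq1 hm.ne' hr hodd)

/-- Solutions of `p^r - 1 = 240 q^m` for primes `p, q > 5` with `q - 1 ∣ 240`, `q ∤ 240`,
`r > 1` and `m ≥ 1`. -/
theorem dio240 (p q r m : ℕ) (hp : p.Prime) (hq : q.Prime)
    (hp5 : 5 < p) (hq5 : 5 < q) (hr : 1 < r) (hm : 0 < m)
    (hq1 : (q - 1) ∣ 240) (hqnd : ¬ q ∣ 240)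
    (heq : p ^ r - 1 = 240 * q ^ m) :
    (p = 11 ∧ r = 4 ∧ q = 61 ∧ m = 1) ∨ (p = 41 ∧ r = 2 ∧ q = 7 ∧ m = 1) :=
  dio240_general p q r m hp hq hp5 hq5 hr hm hq1 heq
end

section
/- If x, y, u, v are non-negative integers such that 2^x·3^y - 2^u·3^v = 1, then (x, y, u, v) is one of (1,0,0,0), (0,1,1,0), (2,0,0,1), (0,2,3,0). -/
/-!
No prime divides two consecutive numbers, so each of `2` and `3` is missing from one side of
`2 ^ x * 3 ^ y = 2 ^ u * 3 ^ v + 1`. Apart from the trivial `2 = 1 + 1`, this leaves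
the equations `2 ^ x = 3 ^ v + 1` and `3 ^ y = 2 ^ u + 1`. In the first, `3 ^ v + 1` is `2` or `4`
modulo `8`, so `x ≤ 2`. In the second, `u ≥ 4` would force `3 ^ y ≡ 1 [MOD 16]`, hence `4 ∣ y`,
hence `5 ∣ 3 ^ y - 1 = 2 ^ u`; so `u ≤ 3`.
-/

lemma eq_zero_or_eq_zero_of_pow_mul_eq_pow_mul_add_one {p x u a b : ℕ} (hp : p ≠ 1)
    (h : p ^ x * a = p ^ u * b + 1) : x = 0 ∨ u = 0 := by
  by_contra! hxu
  have hdvd : p ∣ p ^ u * b + 1 := h ▸ dvd_mul_of_dvd_left (dvd_pow_self p hxu.1) a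
  rw [Nat.dvd_add_right (dvd_mul_of_dvd_left (dvd_pow_self p hxu.2) b)] at hdvd
  exact hp (Nat.dvd_one.mp hdvd)

lemma three_pow_ne_neg_one_zmod_eight (v : ℕ) : (3 : ZMod 8) ^ v ≠ -1 := by
  rw [pow_eq_pow_mod v (show (3 : ZMod 8) ^ 2 = 1 by decide)]
  rcases Nat.mod_two_eq_zero_or_one v with hv | hv <;> rw [hv] <;> decide

lemma two_pow_eq_three_pow_add_one {x v : ℕ} (h : 2 ^ x = 3 ^ v + 1) :
    x = 1 ∧ v = 0 ∨ x = 2 ∧ v = 1 := by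
  have hx : x < 3 := by
    by_contra! hx
    obtain ⟨k, rfl⟩ := Nat.exists_eq_add_of_le' hx
    have hmod := congrArg (Nat.cast : ℕ → ZMod 8) h
    push_cast at hmod
    rw [pow_add, show (2 : ZMod 8) ^ 3 = 0 by decide, mul_zero, eq_comm,
      ← eq_neg_iff_add_eq_zero] at hmod
    exact three_pow_ne_neg_one_zmod_eight v hmod
  have hv : v < 2 := by
    have h2x : 2 ^ x < 2 ^ 3 := Nat.pow_lt_pow_right (by norm_num) hx
    exact (pow_lt_pow_iff_right₀ (by norm_num : (1 : ℕ) < 3)).mp (by omega)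
  interval_cases x <;> interval_cases v <;> simp_all

lemma orderOf_three_zmod_sixteen : orderOf (3 : ZMod 16) = 4 :=
  orderOf_eq_prime_pow (p := 2) (n := 1) (by decide) (by decide)

lemma three_pow_eq_two_pow_add_one {y u : ℕ} (h : 3 ^ y = 2 ^ u + 1) :
    y = 1 ∧ u = 1 ∨ y = 2 ∧ u = 3 := by
  have hu : u < 4 := by
    by_contra! hu
    obtain ⟨k, rfl⟩ := Nat.exists_eq_add_of_le' hu
    obtain ⟨j, rfl⟩ : 4 ∣ y := by
      have hmod := congrArg (Nat.cast : ℕ → ZMod 16) h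
      push_cast at hmod
      rw [pow_add, show (2 : ZMod 16) ^ 4 = 0 by decide, mul_zero, zero_add] at hmod
      exact orderOf_three_zmod_sixteen ▸ orderOf_dvd_iff_pow_eq_one.mpr hmod
    have hmod := congrArg (Nat.cast : ℕ → ZMod 5) h
    push_cast at hmod
    rw [pow_mul, show (3 : ZMod 5) ^ 4 = 1 by decide, one_pow, right_eq_add] at hmod
    have h2 : (2 : ZMod 5) ≠ 0 := by decide
    have : Fact (Nat.Prime 5) := ⟨by norm_num⟩
    exact pow_ne_zero _ h2 hmod
  have hy : y < 3 := by
    have h2u : 2 ^ u < 2 ^ 4 := Nat.pow_lt_pow_right (by norm_num) hu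
    exact (pow_lt_pow_iff_right₀ (by norm_num : (1 : ℕ) < 3)).mp (by omega)
  interval_cases u <;> interval_cases y <;> simp_all

lemma two_pow_mul_three_pow_eq_two {x y : ℕ} (h : 2 ^ x * 3 ^ y = 2) : x = 1 ∧ y = 0 := by
  obtain rfl : y = 0 := by
    by_contra hy
    have h32 : 3 ∣ 2 := h ▸ dvd_mul_of_dvd_right (dvd_pow_self 3 hy) _
    omega
  simpa [Nat.pow_eq_self_iff] using h

/-- The only pairs of consecutive `{2,3}`-numbers: if `2^x 3^y - 2^u 3^v = 1` then
`(x,y,u,v)` is one of `(1,0,0,0)`, `(0,1,1,0)`, `(2,0,0,1)`, `(0,2,3,0)`. -/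
theorem consecutive_two_three_numbers (x y u v : ℕ)
    (h : 2 ^ x * 3 ^ y - 2 ^ u * 3 ^ v = 1) :
    (x, y, u, v) = (1, 0, 0, 0) ∨ (x, y, u, v) = (0, 1, 1, 0) ∨
      (x, y, u, v) = (2, 0, 0, 1) ∨ (x, y, u, v) = (0, 2, 3, 0) := by
  have heq : 2 ^ x * 3 ^ y = 2 ^ u * 3 ^ v + 1 := by omega
  have hxu : x = 0 ∨ u = 0 :=
    eq_zero_or_eq_zero_of_pow_mul_eq_pow_mul_add_one (by norm_num) heq
  have hyv : y = 0 ∨ v = 0 :=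
    eq_zero_or_eq_zero_of_pow_mul_eq_pow_mul_add_one (p := 3) (a := 2 ^ x) (b := 2 ^ u)
      (by norm_num) (by linarith)
  rcases hxu with rfl | rfl <;> rcases hyv with rfl | rfl
  · simp at heq
  · rcases three_pow_eq_two_pow_add_one (by simpa using heq) with ⟨rfl, rfl⟩ | ⟨rfl, rfl⟩ <;> simp
  · rcases two_pow_eq_three_pow_add_one (by simpa using heq) with ⟨rfl, rfl⟩ | ⟨rfl, rfl⟩ <;> simp
  · obtain ⟨rfl, rfl⟩ := two_pow_mul_three_pow_eq_two (by simpa using heq)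
    simp
end

section
/- If p is a positive integer such that both p - 1 and p + 1 are {2,3}-numbers (every prime divisor of each is 2 or 3), then p ∈ {2, 3, 5, 7, 17}. -/
/-!
If `p` is even, `p - 1` and `p + 1` are odd and at most one of them is divisible by `3`, so the
other one is `1` and `p = 2`. If `p = 2m + 1` is odd, then `m` and `m + 1` are consecutive, hence
coprime, `{2,3}`-numbers: one is a power of `2` and the other a power of `3`. The equations
`3 ^ y + 1 = 2 ^ x` and `2 ^ x + 1 = 3 ^ y` are settled by congruences, which leaves
`m ∈ {1, 2, 3, 8}`.
-/

theorem Nat.pow_mod_eq_pow_mod_mod {a n k : ℕ} (m : ℕ) (h : a ^ k % n = 1) :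
    a ^ m % n = a ^ (m % k) % n := by
  conv_lhs => rw [← Nat.div_add_mod m k, pow_add, pow_mul, Nat.mul_mod, Nat.pow_mod, h]
  simp

theorem three_pow_add_one_eq_two_pow {x y : ℕ} (h : 3 ^ y + 1 = 2 ^ x) :
    y = 0 ∧ x = 1 ∨ y = 1 ∧ x = 2 := by
  have hx : x < 3 := by
    by_contra! hx
    have h8 : 2 ^ 3 ∣ 2 ^ x := Nat.pow_dvd_pow 2 hx
    have h3_8 := Nat.pow_mod_eq_pow_mod_mod (a := 3) (n := 8) (k := 2) y (by norm_num)
    rcases Nat.mod_two_eq_zero_or_one y with hy | hy <;> simp only [hy] at h3_8 <;> omega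
  have hy : y < 2 := by
    have : 2 ^ x < 2 ^ 3 := Nat.pow_lt_pow_right (by norm_num) hx
    exact (Nat.pow_lt_pow_iff_right (by norm_num)).mp (show 3 ^ y < 3 ^ 2 by omega)
  interval_cases x <;> interval_cases y <;> simp_all

theorem two_pow_add_one_eq_three_pow {x y : ℕ} (h : 2 ^ x + 1 = 3 ^ y) :
    x = 1 ∧ y = 1 ∨ x = 3 ∧ y = 2 := by
  have hx : x < 4 := by
    by_contra! hx
    have h16 : 2 ^ 4 ∣ 2 ^ x := Nat.pow_dvd_pow 2 hx
    -- `3` has order `4` modulo `16`, and `3 ^ 4 ≡ 1 [MOD 5]`, so `5 ∣ 2 ^ x`.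
    have hy : y % 4 = 0 := by
      have h3_16 := Nat.pow_mod_eq_pow_mod_mod (a := 3) (n := 16) (k := 4) y (by norm_num)
      have := Nat.mod_lt y (show 4 > 0 by norm_num)
      interval_cases y % 4 <;> omega
    have h3_5 := Nat.pow_mod_eq_pow_mod_mod (a := 3) (n := 5) (k := 4) y (by norm_num)
    have h2_5 := Nat.pow_mod_eq_pow_mod_mod (a := 2) (n := 5) (k := 4) x (by norm_num)
    have := Nat.mod_lt x (show 4 > 0 by norm_num)
    rw [hy] at h3_5
    interval_cases x % 4 <;> omega
  have hy : y < 3 := by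
    have : 2 ^ x < 2 ^ 4 := Nat.pow_lt_pow_right (by norm_num) hx
    exact (Nat.pow_lt_pow_iff_right (by norm_num)).mp (show 3 ^ y < 3 ^ 3 by omega)
  interval_cases x <;> interval_cases y <;> simp_all

def IsTwoThreeNumber (n : ℕ) : Prop :=
  ∀ l : ℕ, l.Prime → l ∣ n → l = 2 ∨ l = 3

namespace IsTwoThreeNumber

theorem ne_zero {n : ℕ} (h : IsTwoThreeNumber n) : n ≠ 0 := by
  rintro rfl
  simpa using h 5 (by norm_num) (dvd_zero 5)

theorem of_dvd {m n : ℕ} (h : IsTwoThreeNumber n) (hmn : m ∣ n) : IsTwoThreeNumber m :=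
  fun l hl hlm => h l hl (hlm.trans hmn)

theorem eq_one_of_not_two_dvd_of_not_three_dvd {n : ℕ} (h : IsTwoThreeNumber n)
    (h2 : ¬2 ∣ n) (h3 : ¬3 ∣ n) : n = 1 :=
  Nat.eq_one_iff_not_exists_prime_dvd.mpr fun l hl hln => by
    rcases h l hl hln with rfl | rfl <;> contradiction

theorem exists_eq_two_pow_mul_three_pow {n : ℕ} (h : IsTwoThreeNumber n) :
    ∃ a b : ℕ, n = 2 ^ a * 3 ^ b := by
  refine ⟨n.factorization 2, n.factorization 3, ?_⟩
  have hsupp : n.factorization.support ⊆ {2, 3} := by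
    intro l hl
    rw [Nat.support_factorization, Nat.mem_primeFactors] at hl
    simpa using h l hl.1 hl.2.1
  conv_lhs => rw [← Nat.prod_factorization_pow_eq_self h.ne_zero,
    Finsupp.prod_of_support_subset _ hsupp _ (fun _ _ => pow_zero _)]
  simp

-- Gersonides' theorem.
theorem eq_of_succ {m : ℕ} (hm : IsTwoThreeNumber m) (hsucc : IsTwoThreeNumber (m + 1)) :
    m = 1 ∨ m = 2 ∨ m = 3 ∨ m = 8 := by
  obtain ⟨a, b, rfl⟩ := hm.exists_eq_two_pow_mul_three_pow
  obtain ⟨c, d, hcd⟩ := hsucc.exists_eq_two_pow_mul_three_pow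
  have coprime {q : ℕ} (hq : 2 ≤ q) (hm : q ∣ 2 ^ a * 3 ^ b) (hsucc : q ∣ 2 ^ c * 3 ^ d) :
      False := by
    have := Nat.le_of_dvd one_pos ((Nat.dvd_add_right hm).mp (hcd ▸ hsucc))
    omega
  have hac : a = 0 ∨ c = 0 := by
    by_contra! h
    exact coprime le_rfl (Dvd.dvd.mul_right (dvd_pow_self 2 h.1) _)
      (Dvd.dvd.mul_right (dvd_pow_self 2 h.2) _)
  have hbd : b = 0 ∨ d = 0 := by
    by_contra! h
    exact coprime (by norm_num) (Dvd.dvd.mul_left (dvd_pow_self 3 h.1) _)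
      (Dvd.dvd.mul_left (dvd_pow_self 3 h.2) _)
  rcases hac with rfl | rfl <;> rcases hbd with rfl | rfl
  · simp
  · simp only [pow_zero, one_mul, mul_one] at hcd ⊢
    rcases three_pow_add_one_eq_two_pow hcd with ⟨rfl, rfl⟩ | ⟨rfl, rfl⟩ <;> simp
  · simp only [pow_zero, one_mul, mul_one] at hcd ⊢
    rcases two_pow_add_one_eq_three_pow hcd with ⟨rfl, rfl⟩ | ⟨rfl, rfl⟩ <;> simp
  · simp at hcd

end IsTwoThreeNumber

theorem eq_two_of_even_of_isTwoThreeNumber {n : ℕ} (hpred : IsTwoThreeNumber (n - 1))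
    (hsucc : IsTwoThreeNumber (n + 1)) (hn : Even n) : n = 2 := by
  have hpred0 : n - 1 ≠ 0 := hpred.ne_zero
  have h2 : ¬2 ∣ n - 1 := by
    obtain ⟨k, rfl⟩ := hn
    omega
  by_cases h3 : 3 ∣ n - 1
  · have := hsucc.eq_one_of_not_two_dvd_of_not_three_dvd (by omega) (by omega)
    omega
  · have := hpred.eq_one_of_not_two_dvd_of_not_three_dvd h2 h3
    omega

theorem eq_of_odd_of_isTwoThreeNumber {n : ℕ} (hpred : IsTwoThreeNumber (n - 1))
    (hsucc : IsTwoThreeNumber (n + 1)) (hn : Odd n) : n = 3 ∨ n = 5 ∨ n = 7 ∨ n = 17 := by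
  obtain ⟨m, rfl⟩ := hn
  have := IsTwoThreeNumber.eq_of_succ (m := m) (hpred.of_dvd ⟨2, by omega⟩)
    (hsucc.of_dvd ⟨2, by omega⟩)
  omega

theorem mem_of_pred_succ_two_three_numbers_general (p : ℕ)
    (h1 : ∀ l : ℕ, l.Prime → l ∣ p - 1 → l = 2 ∨ l = 3)
    (h2 : ∀ l : ℕ, l.Prime → l ∣ p + 1 → l = 2 ∨ l = 3) :
    p = 2 ∨ p = 3 ∨ p = 5 ∨ p = 7 ∨ p = 17 := by
  rcases Nat.even_or_odd p with hp | hp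
  · exact Or.inl (eq_two_of_even_of_isTwoThreeNumber h1 h2 hp)
  · exact Or.inr (eq_of_odd_of_isTwoThreeNumber h1 h2 hp)

/-- If `p` is a positive integer such that both `p - 1` and `p + 1` are `{2,3}`-numbers,
then `p ∈ {2, 3, 5, 7, 17}`. -/
theorem mem_of_pred_succ_two_three_numbers (p : ℕ) (hp : 0 < p)
    (h1 : ∀ l : ℕ, l.Prime → l ∣ p - 1 → l = 2 ∨ l = 3)
    (h2 : ∀ l : ℕ, l.Prime → l ∣ p + 1 → l = 2 ∨ l = 3) :
    p = 2 ∨ p = 3 ∨ p = 5 ∨ p = 7 ∨ p = 17 :=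
  mem_of_pred_succ_two_three_numbers_general p h1 h2
end
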